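/- arXiv:1001.5415 — 2 statements merged into one kernel-verified Lean document; each statement's English description precedes it below -/
import Mathlib

section
/- Let $\nu$ be a Borel probability measure on $\mathbb{R}$ with finite first moment, $f_0(\xi) = \nu((\xi,+\infty))$, $u_0 = \int_{\mathbb{R}}(f_0(\xi) - \mathbf{1}_{0>\xi})\,d\xi$, and $f(t,\xi) = e^{-t} f_0(\xi) + (1-e^{-t})\mathbf{1}_{u_0>\xi}$. Then for all $t \geq 0$ and $\xi \in \mathbb{R}$, $m(t,\xi) := \int_{-\infty}^{\xi} \left( \mathbf{1}_{u_0 > \zeta} - f(t,\zeta) \right) d\zeta \geq 0$. -/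
/-!
Write `G = 1_{u₀ > ·} - f₀`, so that the integrand is `exp (-t) * G` and it suffices to show
`∫_{Iic ξ} G ≥ 0`. The choice of `u₀` makes `∫ G = 0` (finite first moment gives integrability,
through the layer cake formula), and `G` changes sign once: `G ≥ 0` below `u₀` because
`f₀ ≤ 1`, and `G ≤ 0` above `u₀` because `f₀ ≥ 0`. Hence the partial integrals of `G` first
increase from `0`, then decrease to `0`, and never become negative.
-/

open MeasureTheory Set Real

theorem integrableOn_Ioi_of_norm_le_measureReal_le {α : Type*} [MeasurableSpace α]
    {μ : Measure α} {g : α → ℝ} (hg : Integrable g μ) (hg₀ : 0 ≤ᵐ[μ] g) {h : ℝ → ℝ}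
    (hm : AEStronglyMeasurable h (volume.restrict (Ioi 0)))
    (hh : ∀ t > 0, ‖h t‖ ≤ μ.real {a | t ≤ g a}) :
    IntegrableOn h (Ioi 0) := by
  refine ⟨hm, ?_⟩
  calc ∫⁻ t in Ioi 0, ‖h t‖ₑ ≤ ∫⁻ t in Ioi 0, μ {a | t ≤ g a} := by
        refine setLIntegral_mono' measurableSet_Ioi fun t ht => ?_
        rw [← ofReal_norm]
        exact (ENNReal.ofReal_le_ofReal (hh t ht)).trans ENNReal.ofReal_toReal_le
    _ = ∫⁻ a, ENNReal.ofReal (g a) ∂μ :=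
        (lintegral_eq_lintegral_meas_le μ hg₀ hg.aemeasurable).symm
    _ < ⊤ := hg.lintegral_lt_top

theorem integrable_measureReal_Ioi_sub_ite_lt_zero (ν : Measure ℝ) [IsProbabilityMeasure ν]
    (hmom : Integrable (fun x : ℝ => |x|) ν) :
    Integrable (fun ξ : ℝ => ν.real (Ioi ξ) - if (0:ℝ) > ξ then 1 else 0) := by
  set F : ℝ → ℝ := fun ξ => ν.real (Ioi ξ) - if (0:ℝ) > ξ then 1 else 0
  have hFm : Measurable F :=
    (Antitone.measurable fun _ _ hst => measureReal_mono (Ioi_subset_Ioi hst)).sub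
      (Measurable.ite measurableSet_Iio measurable_const measurable_const)
  have habs : 0 ≤ᵐ[ν] fun x : ℝ => |x| := .of_forall fun x => abs_nonneg x
  rw [← integrableOn_univ, ← Iio_union_Ici (a := (0:ℝ)), integrableOn_union,
    integrableOn_Ici_iff_integrableOn_Ioi]
  constructor
  · have hneg : IntegrableOn (fun t => F (-t)) (Ioi 0) := by
      refine integrableOn_Ioi_of_norm_le_measureReal_le hmom habs
        (hFm.comp measurable_neg).aestronglyMeasurable fun t ht => ?_
      have hlt : (0:ℝ) > -t := by linarith
      simp only [F, hlt, if_true, ← compl_Iic, probReal_compl_eq_one_sub measurableSet_Iic]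
      rw [sub_sub_cancel_left, norm_neg, Real.norm_of_nonneg measureReal_nonneg]
      exact measureReal_mono fun x (hx : x ≤ -t) => show t ≤ |x| by linarith [neg_le_abs x]
    simpa only [neg_neg] using
      IntegrableOn.comp_neg_Iio (f := fun t => F (-t)) (c := 0) (by rwa [neg_zero])
  · refine integrableOn_Ioi_of_norm_le_measureReal_le hmom habs hFm.aestronglyMeasurable
      fun t ht => ?_
    have hlt : ¬ (0:ℝ) > t := not_lt.2 ht.le
    simp only [F, hlt, if_false, sub_zero, Real.norm_of_nonneg measureReal_nonneg]
    exact measureReal_mono fun x (hx : t < x) => show t ≤ |x| from hx.le.trans (le_abs_self x)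

theorem ite_lt_sub_ite_lt_eq_indicator {a b : ℝ} (hab : a ≤ b) :
    (fun ζ : ℝ => (if b > ζ then (1:ℝ) else 0) - if a > ζ then 1 else 0) =
      (Ico a b).indicator 1 := by
  funext ζ
  simp only [indicator, mem_Ico, Pi.one_apply]
  grind

theorem integrable_ite_lt_sub_ite_lt (a b : ℝ) :
    Integrable (fun ζ : ℝ => (if b > ζ then (1:ℝ) else 0) - if a > ζ then 1 else 0) := by
  wlog hab : a ≤ b generalizing a b
  · simpa only [Pi.neg_def, neg_sub] using (this b a (le_of_not_ge hab)).neg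
  rw [ite_lt_sub_ite_lt_eq_indicator hab, integrable_indicator_iff measurableSet_Ico]
  exact integrableOn_const (by simp)

theorem integral_ite_lt_sub_ite_lt (a b : ℝ) :
    ∫ ζ : ℝ, ((if b > ζ then (1:ℝ) else 0) - if a > ζ then 1 else 0) = b - a := by
  wlog hab : a ≤ b generalizing a b
  · rw [← neg_sub a b, ← this b a (le_of_not_ge hab), ← integral_neg]
    simp only [neg_sub]
  rw [ite_lt_sub_ite_lt_eq_indicator hab, integral_indicator_one measurableSet_Ico,
    Real.volume_real_Ico_of_le hab]

theorem setIntegral_Iic_nonneg_of_integral_eq_zero {G : ℝ → ℝ} {a : ℝ} (hG : Integrable G)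
    (hG₀ : ∫ ζ, G ζ = 0) (hlt : ∀ ζ < a, 0 ≤ G ζ) (hgt : ∀ ζ, a < ζ → G ζ ≤ 0) (ξ : ℝ) :
    0 ≤ ∫ ζ in Iic ξ, G ζ := by
  rcases lt_or_ge ξ a with hξ | hξ
  · exact setIntegral_nonneg measurableSet_Iic fun ζ hζ => hlt ζ (lt_of_le_of_lt hζ hξ)
  · have hsplit := integral_add_compl (s := Iic ξ) measurableSet_Iic hG
    rw [compl_Iic, hG₀] at hsplit
    have hIoi : ∫ ζ in Ioi ξ, G ζ ≤ 0 :=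
      setIntegral_nonpos measurableSet_Ioi fun ζ hζ => hgt ζ (lt_of_le_of_lt hξ hζ)
    linarith

/-- nonnegativity of the collapse defect measure
`m(t,ξ) = ∫_{-∞}^ξ (1_{u₀>ζ} - f(t,ζ)) dζ`. -/
theorem stmt_9
    (ν : Measure ℝ) [IsProbabilityMeasure ν] (hmom : Integrable (fun ξ : ℝ => |ξ|) ν)
    (f₀ : ℝ → ℝ) (hf₀ : ∀ ξ, f₀ ξ = (ν (Ioi ξ)).toReal)
    (u₀ : ℝ) (hu₀ : u₀ = ∫ ξ : ℝ, (f₀ ξ - if (0:ℝ) > ξ then 1 else 0))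
    (f : ℝ → ℝ → ℝ)
    (hf : ∀ t ξ, f t ξ = exp (-t) * f₀ ξ + (1 - exp (-t)) * (if u₀ > ξ then (1:ℝ) else 0)) :
    ∀ t ξ : ℝ, 0 ≤ t →
      0 ≤ ∫ ζ in Iic ξ, ((if u₀ > ζ then (1:ℝ) else 0) - f t ζ) := by
  intro t ξ _
  have hF : Integrable (fun ζ => f₀ ζ - if (0:ℝ) > ζ then 1 else 0) := by
    simpa only [hf₀, measureReal_def] using integrable_measureReal_Ioi_sub_ite_lt_zero ν hmom
  set G : ℝ → ℝ := fun ζ => (if u₀ > ζ then (1:ℝ) else 0) - f₀ ζ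
  have hG_eq : G = fun ζ => ((if u₀ > ζ then (1:ℝ) else 0) - if (0:ℝ) > ζ then 1 else 0)
      - (f₀ ζ - if (0:ℝ) > ζ then 1 else 0) := by
    funext ζ; ring
  have hG : Integrable G := hG_eq ▸ (integrable_ite_lt_sub_ite_lt 0 u₀).sub hF
  have hG₀ : ∫ ζ, G ζ = 0 := by
    rw [hG_eq, integral_sub (integrable_ite_lt_sub_ite_lt 0 u₀) hF,
      integral_ite_lt_sub_ite_lt, ← hu₀, sub_zero, sub_self]
  have hf₀_le_one : ∀ ζ, f₀ ζ ≤ 1 := fun ζ => hf₀ ζ ▸ measureReal_le_one (μ := ν)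
  have hf₀_nonneg : ∀ ζ, 0 ≤ f₀ ζ := fun ζ => hf₀ ζ ▸ measureReal_nonneg
  have hm : 0 ≤ ∫ ζ in Iic ξ, G ζ := setIntegral_Iic_nonneg_of_integral_eq_zero (a := u₀) hG hG₀
    (fun ζ hζ => by simp only [G, if_pos hζ]; linarith [hf₀_le_one ζ])
    (fun ζ hζ => by simp only [G, if_neg (not_lt.2 hζ.le)]; linarith [hf₀_nonneg ζ]) ξ
  have hfG : ∀ ζ, (if u₀ > ζ then (1:ℝ) else 0) - f t ζ = exp (-t) * G ζ := fun ζ => by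
    rw [hf]; ring
  simp only [hfG, integral_const_mul]
  exact mul_nonneg (exp_pos _).le hm
end

section
/- Let $\nu$ be a Borel probability measure on $\mathbb{R}$ with finite first moment, $f_0(\xi) = \nu((\xi,+\infty))$, $u_0 = \int_{\mathbb{R}}(f_0(\xi) - \mathbf{1}_{0>\xi})\,d\xi$, and $f(t,\xi) = e^{-t}f_0(\xi) + (1-e^{-t})\mathbf{1}_{u_0>\xi}$. Then for all $\tau > t \geq 0$ and all $\xi \in \mathbb{R}$, $\int_{-\infty}^{\xi} \left( f(\tau,\zeta) - f(t,\zeta) \right) d\zeta \geq 0$. -/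
open MeasureTheory Set Real

/-!
Write `g = 𝟙_{u₀ > ·} - f₀`, so that `f(τ) - f(t) = (e^{-t} - e^{-τ}) g` with a nonnegative
factor. The function `g` is integrable (by Tonelli, `∫ |f₀ - 𝟙_{0 > ·}| = ∫ |x| dν`), has
integral `u₀ - u₀ = 0` by the choice of `u₀`, is nonnegative left of `u₀` and nonpositive
right of it. A function with these properties has nonnegative primitives `∫_{-∞}^ξ g`: left
of `u₀` the integrand is nonnegative, right of `u₀` the primitive equals `-∫_ξ^∞ g ≥ 0`.
-/

theorem setIntegral_Iic_nonneg_of_integral_eq_zero_s10 {α : Type*} [LinearOrder α]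
    [TopologicalSpace α] [OrderClosedTopology α] [MeasurableSpace α] [OpensMeasurableSpace α]
    {μ : Measure α} {g : α → ℝ} (hg : Integrable g μ) (hg₀ : ∫ x, g x ∂μ = 0) (a : α)
    (hpos : ∀ x < a, 0 ≤ g x) (hneg : ∀ x, a ≤ x → g x ≤ 0) (ξ : α) :
    0 ≤ ∫ x in Iic ξ, g x ∂μ := by
  rcases lt_or_ge ξ a with hξ | hξ
  · exact setIntegral_nonneg measurableSet_Iic fun x hx => hpos x (hx.trans_lt hξ)
  · have hsplit := integral_add_compl measurableSet_Iic hg (s := Iic ξ)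
    rw [compl_Iic, hg₀] at hsplit
    have hright : ∫ x in Ioi ξ, g x ∂μ ≤ 0 :=
      setIntegral_nonpos measurableSet_Ioi fun x hx => hneg x (hξ.trans hx.le)
    linarith

theorem heaviside_sub_heaviside_eq_indicator (a b : ℝ) :
    (fun ζ : ℝ => (if a > ζ then (1 : ℝ) else 0) - if b > ζ then 1 else 0) =
      fun ζ => (Ico b a).indicator 1 ζ - (Ico a b).indicator 1 ζ := by
  funext ζ
  simp only [indicator_apply, mem_Ico, Pi.one_apply]
  split_ifs <;> grind

theorem integrable_indicator_one_Ico (a b : ℝ) : Integrable ((Ico a b).indicator (1 : ℝ → ℝ)) :=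
  (integrable_indicator_iff measurableSet_Ico).mpr (integrableOn_const (by simp))

theorem integrable_heaviside_sub_heaviside (a b : ℝ) :
    Integrable fun ζ : ℝ => (if a > ζ then (1 : ℝ) else 0) - if b > ζ then 1 else 0 := by
  rw [heaviside_sub_heaviside_eq_indicator]
  exact (integrable_indicator_one_Ico b a).sub (integrable_indicator_one_Ico a b)

theorem integral_heaviside_sub_heaviside (a b : ℝ) :
    ∫ ζ : ℝ, ((if a > ζ then (1 : ℝ) else 0) - if b > ζ then 1 else 0) = a - b := by
  rw [heaviside_sub_heaviside_eq_indicator,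
    integral_sub (integrable_indicator_one_Ico b a) (integrable_indicator_one_Ico a b),
    integral_indicator_one measurableSet_Ico, integral_indicator_one measurableSet_Ico,
    Real.volume_real_Ico, Real.volume_real_Ico]
  rcases le_total a b with h | h <;> simp [h]

section Tail

variable (ν : Measure ℝ) [IsProbabilityMeasure ν]

theorem enorm_tail_sub_heaviside (ζ : ℝ) :
    ‖(ν (Ioi ζ)).toReal - if (0 : ℝ) > ζ then 1 else 0‖ₑ =
      ν {x | ζ ∈ Ico (min 0 x) (max 0 x)} := by
  rcases le_or_gt 0 ζ with hζ | hζ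
  · have hsec : {x : ℝ | ζ ∈ Ico (min 0 x) (max 0 x)} = Ioi ζ := by
      ext x
      simp only [mem_ofPred_eq, mem_Ico, min_le_iff, lt_max_iff, mem_Ioi]
      constructor
      · rintro ⟨-, h | h⟩ <;> linarith
      · intro h; exact ⟨Or.inl hζ, Or.inr h⟩
    rw [hsec, if_neg (not_lt.mpr hζ), sub_zero, Real.enorm_eq_ofReal ENNReal.toReal_nonneg,
      ENNReal.ofReal_toReal (measure_ne_top ν _)]
  · have hsec : {x : ℝ | ζ ∈ Ico (min 0 x) (max 0 x)} = Iic ζ := by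
      ext x
      simp only [mem_ofPred_eq, mem_Ico, min_le_iff, lt_max_iff, mem_Iic]
      constructor
      · rintro ⟨h | h, -⟩ <;> linarith
      · intro h; exact ⟨Or.inr h, Or.inl hζ⟩
    have htail : (ν (Ioi ζ)).toReal - 1 = -(ν (Iic ζ)).toReal := by
      rw [← compl_Iic, prob_compl_eq_one_sub measurableSet_Iic,
        ENNReal.toReal_sub_of_le prob_le_one ENNReal.one_ne_top, ENNReal.toReal_one]
      ring
    rw [hsec, if_pos hζ, htail, enorm_neg, Real.enorm_eq_ofReal ENNReal.toReal_nonneg,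
      ENNReal.ofReal_toReal (measure_ne_top ν _)]

theorem integrable_tail_sub_heaviside (hmom : Integrable (fun x : ℝ => |x|) ν) :
    Integrable fun ζ : ℝ => (ν (Ioi ζ)).toReal - if (0 : ℝ) > ζ then 1 else 0 := by
  have htail : Antitone fun ζ : ℝ => (ν (Ioi ζ)).toReal := fun a b hab =>
    ENNReal.toReal_mono (measure_ne_top ν _) (measure_mono (Ioi_subset_Ioi hab))
  have hmeas : Measurable fun ζ : ℝ => (ν (Ioi ζ)).toReal - if (0 : ℝ) > ζ then 1 else 0 :=
    htail.measurable.sub (Measurable.ite measurableSet_Iio measurable_const measurable_const)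
  refine ⟨hmeas.aestronglyMeasurable, ?_⟩
  let S : Set (ℝ × ℝ) := {p | p.1 ∈ Ico (min 0 p.2) (max 0 p.2)}
  have hS : MeasurableSet S :=
    (measurableSet_le (measurable_const.min measurable_snd) measurable_fst).inter
      (measurableSet_lt measurable_fst (measurable_const.max measurable_snd))
  -- Tonelli on `S = {(ζ, x) | ζ lies between 0 and x}`, whose `x`-sections have length `|x|`.
  calc ∫⁻ ζ, ‖(ν (Ioi ζ)).toReal - if (0 : ℝ) > ζ then 1 else 0‖ₑ
      = (volume.prod ν) S := by
        simp only [enorm_tail_sub_heaviside, Measure.prod_apply hS]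
        rfl
    _ = ∫⁻ x, ENNReal.ofReal |x| ∂ν := by
        rw [Measure.prod_apply_symm hS]
        refine lintegral_congr fun x => ?_
        change volume (Ico (min 0 x) (max 0 x)) = _
        rw [Real.volume_Ico, max_sub_min_eq_abs, sub_zero]
    _ < ⊤ :=
        (hasFiniteIntegral_iff_ofReal (.of_forall fun x => abs_nonneg x)).mp hmom.hasFiniteIntegral

end Tail

/-- monotonicity in time of the primitives of the collapse
solution: `∫_{-∞}^ξ (f(τ) - f(t)) ≥ 0` for `τ > t ≥ 0`. -/
theorem stmt_10
    (ν : Measure ℝ) [IsProbabilityMeasure ν] (hmom : Integrable (fun ξ : ℝ => |ξ|) ν)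
    (f₀ : ℝ → ℝ) (hf₀ : ∀ ξ, f₀ ξ = (ν (Ioi ξ)).toReal)
    (u₀ : ℝ) (hu₀ : u₀ = ∫ ξ : ℝ, (f₀ ξ - if (0:ℝ) > ξ then 1 else 0))
    (f : ℝ → ℝ → ℝ)
    (hf : ∀ t ξ, f t ξ = exp (-t) * f₀ ξ + (1 - exp (-t)) * (if u₀ > ξ then (1:ℝ) else 0)) :
    ∀ t τ ξ : ℝ, 0 ≤ t → t < τ →
      0 ≤ ∫ ζ in Iic ξ, (f τ ζ - f t ζ) := by
  intro t τ ξ _ htτ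
  set g : ℝ → ℝ := fun ζ => (if u₀ > ζ then (1 : ℝ) else 0) - f₀ ζ
  have hstep := integrable_heaviside_sub_heaviside u₀ 0
  have htail : Integrable fun ζ => f₀ ζ - if (0 : ℝ) > ζ then 1 else 0 := by
    simpa only [hf₀] using integrable_tail_sub_heaviside ν hmom
  have hg : g = fun ζ => ((if u₀ > ζ then (1 : ℝ) else 0) - if (0 : ℝ) > ζ then 1 else 0) -
      (f₀ ζ - if (0 : ℝ) > ζ then 1 else 0) := by
    funext ζ; ring
  have hg_int : Integrable g := hg ▸ hstep.sub htail
  have hg₀ : ∫ ζ, g ζ = 0 := by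
    rw [hg, integral_sub hstep htail, integral_heaviside_sub_heaviside, ← hu₀, sub_zero, sub_self]
  have hprim : 0 ≤ ∫ ζ in Iic ξ, g ζ :=
    setIntegral_Iic_nonneg_of_integral_eq_zero_s10 hg_int hg₀ u₀
      (fun ζ hζ => by
        simp only [g, if_pos hζ, hf₀, sub_nonneg]
        exact measureReal_le_one)
      (fun ζ hζ => by
        simp only [g, if_neg (not_lt.mpr hζ), hf₀, zero_sub, neg_nonpos]
        exact ENNReal.toReal_nonneg)
      ξ
  have hdiff : ∀ ζ, f τ ζ - f t ζ = (exp (-t) - exp (-τ)) * g ζ := fun ζ => by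
    simp only [hf, g]; ring
  simp only [hdiff, integral_const_mul]
  exact mul_nonneg (sub_nonneg.mpr (exp_le_exp.mpr (by linarith))) hprim
end
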